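/- Let g : ℝ^m → ℂ be smooth and vanishing to infinite order at 0 (all derivatives of g vanish at 0), and let h : ℝ^m → ℂ be smooth with h(0)=0 and Re h(x) ≥ c|x|², c > 0, on a compact neighborhood K of 0. Then for every multi-index α, sup_{x ∈ K} |D^α (g(x) e^{-λ h(x)})| → 0 as λ → ∞. -/

import Mathlib

open Nat

set_option maxHeartbeats 1000000

lemma norm_iteratedFDeriv_real_cexp' (i : ℕ) (z : ℂ) :
    ‖iteratedFDeriv ℝ i Complex.exp z‖ = Real.exp z.re := by
  have hC : HasFTaylorSeriesUpToOn (⊤ : ℕ∞) Complex.exp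
      (ftaylorSeriesWithin ℂ Complex.exp Set.univ) Set.univ :=
    (Complex.contDiff_exp.of_le le_top).contDiffOn.ftaylorSeriesWithin uniqueDiffOn_univ
  have hR := hC.restrictScalars ℝ
  rw [hasFTaylorSeriesUpToOn_univ_iff] at hR
  have := hR.eq_iteratedFDeriv (m := i) (by exact_mod_cast le_top) z
  rw [← this]
  show ‖ContinuousMultilinearMap.restrictScalars ℝ
    (ftaylorSeriesWithin ℂ Complex.exp Set.univ z i)‖ = _
  rw [ContinuousMultilinearMap.norm_restrictScalars, ftaylorSeriesWithin_univ]
  show ‖iteratedFDeriv ℂ i Complex.exp z‖ = _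
  rw [norm_iteratedFDeriv_eq_norm_iteratedDeriv, iteratedDeriv_eq_iterate,
    Complex.iter_deriv_exp, Complex.norm_exp]

lemma flat_bound {E : Type*} [NormedAddCommGroup E] [NormedSpace ℝ E] [ProperSpace E]
    (g : E → ℂ) (hg : ContDiff ℝ (⊤ : ℕ∞) g) (hflat : ∀ n, iteratedFDeriv ℝ n g 0 = 0)
    (r : ℝ) (M : ℕ) : ∀ k : ℕ,
    ∃ C, 0 ≤ C ∧ ∀ x ∈ Metric.closedBall (0:E) r, ‖iteratedFDeriv ℝ k g x‖ ≤ C * ‖x‖ ^ M := by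
  induction M with
  | zero =>
    intro k
    obtain ⟨C, hC⟩ := (isCompact_closedBall (0:E) r).exists_bound_of_continuousOn
      ((hg.continuous_iteratedFDeriv (m := k) (by exact_mod_cast le_top)).continuousOn)
    refine ⟨max C 0, le_max_right _ _, fun x hx => ?_⟩
    simpa using le_trans (hC x hx) (le_max_left C 0)
  | succ M IH =>
    intro k
    obtain ⟨C, hC0, hC⟩ := IH (k + 1)
    refine ⟨C, hC0, fun x hx => ?_⟩
    have hseg : segment ℝ (0:E) x ⊆ Metric.closedBall 0 r := by
      intro y hy
      rcases hy with ⟨a, b, ha, hb, hab, rfl⟩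
      simp only [smul_zero, zero_add]
      rw [Metric.mem_closedBall, _root_.dist_zero_right] at hx ⊢
      calc ‖b • x‖ = |b| * ‖x‖ := by rw [norm_smul, Real.norm_eq_abs]
        _ ≤ 1 * r := by
            apply mul_le_mul _ hx (norm_nonneg _) zero_le_one
            rw [abs_of_nonneg hb]; linarith
        _ = r := one_mul r
    have hdiff : ∀ y ∈ segment ℝ (0:E) x,
        DifferentiableAt ℝ (iteratedFDeriv ℝ k g) y := fun y _ =>
      (hg.differentiable_iteratedFDeriv (m := k) (by exact_mod_cast lt_top_iff_ne_top.2 (by simp))) y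
    have hbound : ∀ y ∈ segment ℝ (0:E) x,
        ‖fderiv ℝ (iteratedFDeriv ℝ k g) y‖ ≤ C * ‖x‖ ^ M := by
      intro y hy
      rw [norm_fderiv_iteratedFDeriv]
      refine le_trans (hC y (hseg hy)) ?_
      have hyx : ‖y‖ ≤ ‖x‖ := by
        rcases hy with ⟨a, b, ha, hb, hab, rfl⟩
        simp only [smul_zero, zero_add]
        rw [norm_smul, Real.norm_eq_abs, abs_of_nonneg hb]
        nlinarith [norm_nonneg x]
      exact mul_le_mul_of_nonneg_left (pow_le_pow_left₀ (norm_nonneg _) hyx M) hC0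
    have key := (convex_segment (0:E) x).norm_image_sub_le_of_norm_fderiv_le hdiff hbound
      (left_mem_segment ℝ 0 x) (right_mem_segment ℝ 0 x)
    rw [hflat k, sub_zero, sub_zero] at key
    calc ‖iteratedFDeriv ℝ k g x‖ ≤ C * ‖x‖ ^ M * ‖x‖ := key
      _ = C * ‖x‖ ^ (M + 1) := by rw [mul_assoc, ← pow_succ]

lemma pow_mul_exp_neg_le (k : ℕ) {t : ℝ} (ht : 0 ≤ t) :
    t ^ k * Real.exp (-t) ≤ (k ! : ℝ) := by
  rw [Real.exp_neg, mul_inv_le_iff₀ (Real.exp_pos t)]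
  have h1 : t ^ k / k ! ≤ Real.exp t := by
    refine le_trans ?_ (Real.sum_le_exp_of_nonneg ht (k+1))
    exact Finset.single_le_sum (f := fun i => t^i / i !)
      (fun i _ => by positivity) (Finset.self_mem_range_succ k)
  have hk : (0:ℝ) < k ! := by exact_mod_cast Nat.factorial_pos k
  calc t ^ k = (t^k / k !) * k ! := by field_simp
    _ ≤ Real.exp t * k ! := by gcongr
    _ = ↑k ! * Real.exp t := mul_comm _ _

lemma key_bound (n : ℕ) {c lam x2 : ℝ} (hc : 0 < c) (hlam : 1 ≤ lam) (hx2 : 0 ≤ x2) :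
    x2 ^ (n+1) * Real.exp (-(lam * (c * x2))) ≤ ((n+1)! : ℝ) / (lam * c) ^ (n+1) := by
  have hlc : 0 < lam * c := by nlinarith
  rw [le_div_iff₀ (pow_pos hlc _)]
  have ht : 0 ≤ lam * (c * x2) := by positivity
  have h2 := pow_mul_exp_neg_le (n+1) ht
  calc x2 ^ (n+1) * Real.exp (-(lam * (c * x2))) * (lam*c)^(n+1)
      = (lam * (c * x2)) ^ (n+1) * Real.exp (-(lam * (c * x2))) := by
        rw [mul_pow, mul_pow]; ring
    _ ≤ _ := h2

lemma exp_comp_bound {E : Type*} [NormedAddCommGroup E] [NormedSpace ℝ E]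
    (h : E → ℂ) (hh : ContDiff ℝ (⊤ : ℕ∞) h) (n j : ℕ) (hj : j ≤ n) (A lam : ℝ)
    (hA : 0 ≤ A) (hlam : 1 ≤ lam) (x : E)
    (hder : ∀ i, i ≤ n → ‖iteratedFDeriv ℝ i h x‖ ≤ A) :
    ‖iteratedFDeriv ℝ j (fun y => Complex.exp (-(lam:ℂ) * h y)) x‖ ≤
      (n ! : ℝ) * Real.exp (-(lam * (h x).re)) * (lam * (A+1))^n := by
  have hh' : ContDiff ℝ (⊤:ℕ∞) h := hh.of_le (by simp)
  have hf : ContDiff ℝ (⊤:ℕ∞) (fun y => -(lam:ℂ) * h y) := contDiff_const.mul hh'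
  have hrez : (-(lam:ℂ) * h x).re = -(lam * (h x).re) := by simp
  have hcomp : (fun y => Complex.exp (-(lam:ℂ) * h y))
      = Complex.exp ∘ (fun y => -(lam:ℂ) * h y) := rfl
  have hD : 0 ≤ lam * (A + 1) := by positivity
  have h1D : 1 ≤ lam * (A + 1) := by nlinarith
  have key := norm_iteratedFDeriv_comp_le (𝕜 := ℝ) (n := j) (N := (⊤ : ℕ∞))
    Complex.contDiff_exp hf (by exact_mod_cast le_top) x
    (C := Real.exp (-(lam * (h x).re))) (D := lam * (A+1))
    (fun i _ => by
      rw [norm_iteratedFDeriv_real_cexp', hrez])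
    (fun i hi1 hin => by
      have heq : (fun y => -(lam:ℂ) * h y) = (fun y => (-(lam:ℂ)) • h y) := by
        funext y; rw [smul_eq_mul]
      rw [heq, iteratedFDeriv_const_smul_apply'
        (hh'.of_le (by exact_mod_cast le_top)).contDiffAt]
      have hnl : ‖(-(lam:ℂ))‖ = lam := by
        simp [abs_of_nonneg (by linarith : (0:ℝ) ≤ lam)]
      calc ‖(-(lam:ℂ)) • iteratedFDeriv ℝ i h x‖
          ≤ ‖(-(lam:ℂ))‖ * ‖iteratedFDeriv ℝ i h x‖ :=
            ContinuousMultilinearMap.opNorm_smul_le _ _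
        _ = lam * ‖iteratedFDeriv ℝ i h x‖ := by rw [hnl]
        _ ≤ lam * (A+1) := by
            have := hder i (le_trans hin hj)
            nlinarith
        _ ≤ (lam * (A+1)) ^ i := le_self_pow₀ h1D (by omega))
  rw [hcomp]
  refine le_trans key ?_
  have hfj : (j ! : ℝ) ≤ (n ! : ℝ) := by exact_mod_cast Nat.factorial_le hj
  have hpj : (lam*(A+1))^j ≤ (lam*(A+1))^n := pow_le_pow_right₀ h1D hj
  have he : (0:ℝ) < Real.exp (-(lam * (h x).re)) := Real.exp_pos _
  calc (j ! : ℝ) * Real.exp (-(lam * (h x).re)) * (lam * (A+1))^j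
      ≤ (n ! : ℝ) * Real.exp (-(lam * (h x).re)) * (lam * (A+1))^n := by
        apply mul_le_mul (by nlinarith) hpj (by positivity) (by positivity)
    _ = _ := rfl

/-- if `g` vanishes to infinite order at `0` and
`Re h(x) ≥ c|x|²` on a compact neighborhood `K` of `0`, then every derivative
of `g·e^{-λh}` tends to `0` uniformly on `K` as `λ → ∞`. -/
theorem stmt14 (m : ℕ) (c : ℝ) (hc : 0 < c)
    (g h : EuclideanSpace ℝ (Fin m) → ℂ)
    (hg : ContDiff ℝ (⊤ : ℕ∞) g) (hh : ContDiff ℝ (⊤ : ℕ∞) h)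
    (hflat : ∀ n : ℕ, iteratedFDeriv ℝ n g 0 = 0)
    (hh0 : h 0 = 0)
    (K : Set (EuclideanSpace ℝ (Fin m))) (hK : IsCompact K) (hK0 : K ∈ nhds 0)
    (hre : ∀ x ∈ K, c * ‖x‖ ^ 2 ≤ (h x).re) :
    ∀ n : ℕ, ∀ ε > 0, ∃ Λ : ℝ, ∀ lam : ℝ, Λ ≤ lam → ∀ x ∈ K,
      ‖iteratedFDeriv ℝ n (fun y => g y * Complex.exp (-(lam : ℂ) * h y)) x‖ < ε := by
  intro n ε hε
  -- radius of a ball inside K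
  obtain ⟨r, hr0, hrK⟩ := Metric.nhds_basis_closedBall.mem_iff.1 hK0
  -- flat bounds on the ball
  choose Cf hCf0 hCf using flat_bound g hg hflat r (2*(n+1))
  set Cg : ℝ := ∑ i ∈ Finset.range (n+1), Cf i with hCgdef
  have hCg0 : 0 ≤ Cg := Finset.sum_nonneg fun i _ => hCf0 i
  have hCgle : ∀ i ≤ n, Cf i ≤ Cg := fun i hi =>
    Finset.single_le_sum (fun j _ => hCf0 j) (Finset.mem_range.2 (by omega))
  -- global sup bounds for g derivatives on K
  have hsupg : ∀ i : ℕ, ∃ D, 0 ≤ D ∧ ∀ x ∈ K, ‖iteratedFDeriv ℝ i g x‖ ≤ D := by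
    intro i
    obtain ⟨D, hD⟩ := hK.exists_bound_of_continuousOn
      ((hg.continuous_iteratedFDeriv (m := i) (by exact_mod_cast le_top)).continuousOn)
    exact ⟨max D 0, le_max_right _ _, fun x hx => (hD x hx).trans (le_max_left _ _)⟩
  choose Df hDf0 hDf using hsupg
  set Dg : ℝ := ∑ i ∈ Finset.range (n+1), Df i with hDgdef
  have hDg0 : 0 ≤ Dg := Finset.sum_nonneg fun i _ => hDf0 i
  have hDgle : ∀ i ≤ n, Df i ≤ Dg := fun i hi =>
    Finset.single_le_sum (fun j _ => hDf0 j) (Finset.mem_range.2 (by omega))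
  have hrpow : (0:ℝ) < r ^ (2*(n+1)) := pow_pos hr0 _
  set CG : ℝ := Cg + Dg / r^(2*(n+1)) with hCGdef
  have hCG0 : 0 ≤ CG := by positivity
  -- combined flat bound on K
  have hgK : ∀ i, i ≤ n → ∀ x ∈ K, ‖iteratedFDeriv ℝ i g x‖ ≤ CG * ‖x‖^(2*(n+1)) := by
    intro i hi x hx
    by_cases hxr : ‖x‖ ≤ r
    · have h1 := hCf i x (by simpa [Metric.mem_closedBall, _root_.dist_zero_right] using hxr)
      have h2 : Cf i * ‖x‖^(2*(n+1)) ≤ CG * ‖x‖^(2*(n+1)) := by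
        have hCgCG : Cg ≤ CG := by
          rw [hCGdef]
          have : 0 ≤ Dg / r^(2*(n+1)) := by positivity
          linarith
        have : Cf i ≤ CG := le_trans (hCgle i hi) hCgCG
        gcongr
      exact le_trans h1 h2
    · push_neg at hxr
      have h1 : r ^ (2*(n+1)) ≤ ‖x‖^(2*(n+1)) := pow_le_pow_left₀ hr0.le hxr.le _
      have hQ0 : 0 ≤ Dg / r^(2*(n+1)) := by positivity
      calc ‖iteratedFDeriv ℝ i g x‖ ≤ Df i := hDf i x hx
        _ ≤ Dg := hDgle i hi
        _ = Dg / r^(2*(n+1)) * r^(2*(n+1)) := by field_simp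
        _ ≤ Dg / r^(2*(n+1)) * ‖x‖^(2*(n+1)) := by gcongr
        _ ≤ CG * ‖x‖^(2*(n+1)) := by
            have : (0:ℝ) ≤ ‖x‖^(2*(n+1)) := by positivity
            nlinarith
  -- bound for h derivatives on K
  have hsuph : ∀ i : ℕ, ∃ D, 0 ≤ D ∧ ∀ x ∈ K, ‖iteratedFDeriv ℝ i h x‖ ≤ D := by
    intro i
    obtain ⟨D, hD⟩ := hK.exists_bound_of_continuousOn
      ((hh.continuous_iteratedFDeriv (m := i) (by exact_mod_cast le_top)).continuousOn)
    exact ⟨max D 0, le_max_right _ _, fun x hx => (hD x hx).trans (le_max_left _ _)⟩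
  choose Af hAf0 hAf using hsuph
  set A : ℝ := ∑ i ∈ Finset.range (n+1), Af i with hAdef
  have hA0 : 0 ≤ A := Finset.sum_nonneg fun i _ => hAf0 i
  have hAle : ∀ i ≤ n, ∀ x ∈ K, ‖iteratedFDeriv ℝ i h x‖ ≤ A := fun i hi x hx =>
    le_trans (hAf i x hx)
      (Finset.single_le_sum (fun j _ => hAf0 j) (Finset.mem_range.2 (by omega)))
  -- final constants
  set B : ℝ := CG * (n ! : ℝ) * (A+1)^n * ((n+1)! : ℝ) / c^(n+1) with hBdef
  have hB0 : 0 ≤ B := by positivity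
  set Q : ℝ := 2^n * B with hQdef
  have hQ0 : 0 ≤ Q := by positivity
  refine ⟨max 1 (Q/ε + 1), fun lam hlam x hx => ?_⟩
  have hlam1 : 1 ≤ lam := le_trans (le_max_left _ _) hlam
  have hlam0 : 0 < lam := lt_of_lt_of_le one_pos hlam1
  have hlamQ : Q/ε + 1 ≤ lam := le_trans (le_max_right _ _) hlam
  -- the pointwise product estimate
  have hExp : ContDiff ℝ (⊤ : ℕ∞) (fun y => Complex.exp (-(lam:ℂ) * h y)) :=
    (contDiff_const.mul hh).cexp
  have hmul := norm_iteratedFDeriv_mul_le (𝕜 := ℝ) hg hExp x (n := n) (by exact_mod_cast le_top)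
  -- key product bound
  have hP : CG * ‖x‖^(2*(n+1)) *
      ((n ! : ℝ) * Real.exp (-(lam * (h x).re)) * (lam*(A+1))^n) ≤ B / lam := by
    have e1 : Real.exp (-(lam * (h x).re)) ≤ Real.exp (-(lam * (c * ‖x‖^2))) := by
      apply Real.exp_le_exp.2
      have := hre x hx
      nlinarith
    have e2 : (‖x‖^2) ^ (n+1) * Real.exp (-(lam * (c * ‖x‖^2)))
        ≤ ((n+1)! : ℝ) / (lam*c)^(n+1) := key_bound n hc hlam1 (by positivity)
    have hfn0 : (0:ℝ) ≤ (n ! : ℝ) := by positivity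
    calc CG * ‖x‖^(2*(n+1)) * ((n ! : ℝ) * Real.exp (-(lam * (h x).re)) * (lam*(A+1))^n)
        ≤ CG * ‖x‖^(2*(n+1)) *
            ((n ! : ℝ) * Real.exp (-(lam * (c * ‖x‖^2))) * (lam*(A+1))^n) := by gcongr
      _ = CG * (n ! : ℝ) * (lam*(A+1))^n *
            ((‖x‖^2)^(n+1) * Real.exp (-(lam * (c * ‖x‖^2)))) := by
          rw [pow_mul]; ring
      _ ≤ CG * (n ! : ℝ) * (lam*(A+1))^n * (((n+1)! : ℝ) / (lam*c)^(n+1)) := by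
          have : (0:ℝ) ≤ CG * (n ! : ℝ) * (lam*(A+1))^n := by positivity
          exact mul_le_mul_of_nonneg_left e2 this
      _ = B / lam := by
          have hlne : lam ≠ 0 := ne_of_gt hlam0
          have hcne : c ≠ 0 := ne_of_gt hc
          rw [hBdef, mul_pow, mul_pow]
          field_simp
          ring
  -- bound each summand
  have hsum : ∑ i ∈ Finset.range (n+1), (n.choose i : ℝ) * ‖iteratedFDeriv ℝ i g x‖ *
      ‖iteratedFDeriv ℝ (n-i) (fun y => Complex.exp (-(lam:ℂ) * h y)) x‖
      ≤ ∑ i ∈ Finset.range (n+1), (n.choose i : ℝ) * (B / lam) := by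
    apply Finset.sum_le_sum
    intro i hi
    have hin : i ≤ n := by
      have := Finset.mem_range.1 hi; omega
    have ha := hgK i hin x hx
    have hb := exp_comp_bound h hh n (n-i) (by omega) A lam hA0 hlam1 x
      (fun j hj => hAle j hj x hx)
    have hprod : ‖iteratedFDeriv ℝ i g x‖ *
        ‖iteratedFDeriv ℝ (n-i) (fun y => Complex.exp (-(lam:ℂ) * h y)) x‖
        ≤ CG * ‖x‖^(2*(n+1)) *
          ((n ! : ℝ) * Real.exp (-(lam * (h x).re)) * (lam*(A+1))^n) :=
      mul_le_mul ha hb (norm_nonneg _) (by positivity)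
    have hch : (0:ℝ) ≤ (n.choose i : ℝ) := by positivity
    calc (n.choose i : ℝ) * ‖iteratedFDeriv ℝ i g x‖ *
        ‖iteratedFDeriv ℝ (n-i) (fun y => Complex.exp (-(lam:ℂ) * h y)) x‖
        = (n.choose i : ℝ) * (‖iteratedFDeriv ℝ i g x‖ *
          ‖iteratedFDeriv ℝ (n-i) (fun y => Complex.exp (-(lam:ℂ) * h y)) x‖) := by ring
      _ ≤ (n.choose i : ℝ) * (CG * ‖x‖^(2*(n+1)) *
          ((n ! : ℝ) * Real.exp (-(lam * (h x).re)) * (lam*(A+1))^n)) := by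
          exact mul_le_mul_of_nonneg_left hprod hch
      _ ≤ (n.choose i : ℝ) * (B / lam) := mul_le_mul_of_nonneg_left hP hch
  have hsum2 : ∑ i ∈ Finset.range (n+1), (n.choose i : ℝ) * (B / lam) = Q / lam := by
    rw [← Finset.sum_mul, hQdef]
    have hbin : ∑ i ∈ Finset.range (n+1), (n.choose i : ℝ) = (2:ℝ)^n := by
      rw [← Nat.cast_sum, Nat.sum_range_choose]
      push_cast
      ring
    rw [hbin]
    ring
  have hQlt : Q / lam < ε := by
    rw [div_lt_iff₀ hlam0]
    have h1 : Q/ε ≤ lam - 1 := by linarith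
    have h2 : Q = (Q/ε)*ε := by field_simp
    nlinarith
  calc ‖iteratedFDeriv ℝ n (fun y => g y * Complex.exp (-(lam:ℂ) * h y)) x‖
      ≤ ∑ i ∈ Finset.range (n+1), (n.choose i : ℝ) * ‖iteratedFDeriv ℝ i g x‖ *
        ‖iteratedFDeriv ℝ (n-i) (fun y => Complex.exp (-(lam:ℂ) * h y)) x‖ := hmul
    _ ≤ ∑ i ∈ Finset.range (n+1), (n.choose i : ℝ) * (B / lam) := hsum
    _ = Q / lam := hsum2
    _ < ε := hQlt
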